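/- arXiv:2110.06134 — 3 statements merged into one kernel-verified Lean document; each statement's English description precedes it below -/
import Mathlib

section
/- If f : D → G is a non-constant holomorphic map between Riemann surfaces, γ : [0,1] → G is a path, φ is a local inverse of f defined near γ(0) that admits analytic continuation along γ restricted to [0,1), and the lifted curve Γ(t) = φ(γ(t)) has a limit point z₁ in D as t → 1, then Γ(t) converges to z₁ as t → 1 and f(z₁) = γ(1). -/
open Filter Set Metric Topology

/-- If `f` is a nonconstant holomorphic map `D → G` between (plane) domains,
`γ : [0,1] → G` is a path, and `Γ : [0,1) → D` is a continuous lift of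
`γ|[0,1)` under `f` (arising from analytic continuation of a local inverse of
`f` along `γ`), and the lifted curve `Γ` has a limit point `z₁ ∈ D` as
`t → 1`, then `Γ(t) → z₁` as `t → 1` and `f(z₁) = γ(1)`. -/
theorem stmt_0 (D G : Set ℂ) (hD : IsOpen D) (hDconn : IsConnected D)
    (hG : IsOpen G)
    (f : ℂ → ℂ) (hf : DifferentiableOn ℂ f D) (hmaps : Set.MapsTo f D G)
    (hnc : ¬ ∃ c : ℂ, Set.EqOn f (fun _ => c) D)
    (γ : ℝ → ℂ) (hγcont : ContinuousOn γ (Set.Icc 0 1))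
    (hγG : ∀ t ∈ Set.Icc (0:ℝ) 1, γ t ∈ G)
    (Γ : ℝ → ℂ) (hΓcont : ContinuousOn Γ (Set.Ico 0 1))
    (hΓD : ∀ t ∈ Set.Ico (0:ℝ) 1, Γ t ∈ D)
    (hlift : ∀ t ∈ Set.Ico (0:ℝ) 1, f (Γ t) = γ t)
    (z₁ : ℂ) (hz₁ : z₁ ∈ D)
    (hcluster : MapClusterPt z₁ (nhdsWithin 1 (Set.Ico 0 1)) Γ) :
    Filter.Tendsto Γ (nhdsWithin 1 (Set.Ico 0 1)) (nhds z₁) ∧ f z₁ = γ 1 := by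
  set l : Filter ℝ := nhdsWithin 1 (Set.Ico 0 1) with hl
  -- basic facts
  have hfc : ContinuousAt f z₁ :=
    (hf.differentiableAt (hD.mem_nhds hz₁)).continuousAt
  have hmemIco : ∀ᶠ t in l, t ∈ Set.Ico (0:ℝ) 1 := self_mem_nhdsWithin
  have hγlim : Tendsto γ l (𝓝 (γ 1)) := by
    have h1 : ContinuousWithinAt γ (Set.Icc 0 1) 1 := hγcont 1 (by norm_num)
    exact h1.tendsto.mono_left (nhdsWithin_mono _ Set.Ico_subset_Icc_self)
  -- f z₁ = γ 1
  have hfΓγ : Tendsto (f ∘ Γ) l (𝓝 (γ 1)) := by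
    refine hγlim.congr' ?_
    filter_upwards [hmemIco] with t ht
    exact (hlift t ht).symm
  have hfz : f z₁ = γ 1 := by
    have h1 : MapClusterPt (f z₁) l (f ∘ Γ) := MapClusterPt.continuousAt_comp hfc hcluster
    have h2 : ClusterPt (f z₁) (𝓝 (γ 1)) := h1.clusterPt.mono hfΓγ
    exact (eq_of_nhds_neBot h2)
  refine ⟨?_, hfz⟩
  -- isolated preimages of γ 1
  have hA : AnalyticOnNhd ℂ f D := hf.analyticOnNhd hD
  have hiso : ∀ᶠ z in 𝓝[≠] z₁, f z ≠ γ 1 := by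
    rcases (hA z₁ hz₁).eventually_eq_or_eventually_ne (analyticAt_const (v := γ 1)) with h | h
    · exfalso
      refine hnc ⟨γ 1, ?_⟩
      exact hA.eqOn_of_preconnected_of_eventuallyEq analyticOnNhd_const
        hDconn.isPreconnected hz₁ h
    · exact h
  -- get a punctured ball where f ≠ γ 1
  have hiso' : ∀ᶠ z in 𝓝 z₁, z ∈ D ∧ (z ≠ z₁ → f z ≠ γ 1) := by
    have h1 : ∀ᶠ z in 𝓝 z₁, z ≠ z₁ → f z ≠ γ 1 := by
      rwa [eventually_nhdsWithin_iff] at hiso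
    filter_upwards [hD.mem_nhds hz₁, h1] with z hz h2 using ⟨hz, h2⟩
  rcases Metric.eventually_nhds_iff.mp hiso' with ⟨r₀, hr₀, hball⟩
  -- main tendsto statement
  rw [Metric.tendsto_nhds]
  intro ε hε
  set r : ℝ := min (ε / 2) (r₀ / 2) with hrdef
  have hr : 0 < r := lt_min (by linarith) (by linarith)
  have hrε : r < ε := lt_of_le_of_lt (min_le_left _ _) (by linarith)
  have hrr₀ : r < r₀ := lt_of_le_of_lt (min_le_right _ _) (by linarith)
  -- the sphere of radius r
  have hsphD : Metric.sphere z₁ r ⊆ D := fun z hz => by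
    have : dist z z₁ = r := hz
    exact (hball (by rw [this]; exact hrr₀)).1
  have hne : z₁ ∉ Metric.sphere z₁ r := by
    intro h
    exact hr.ne (by simpa using h)
  have hsphne : (Metric.sphere z₁ r).Nonempty :=
    NormedSpace.sphere_nonempty.mpr hr.le
  have hcontdist : ContinuousOn (fun z => dist (f z) (γ 1)) (Metric.sphere z₁ r) :=
    (continuous_id.dist continuous_const).comp_continuousOn (hf.continuousOn.mono hsphD)
  obtain ⟨w, hw, hwmin⟩ := (isCompact_sphere z₁ r).exists_isMinOn hsphne hcontdist
  set m : ℝ := dist (f w) (γ 1) with hmdef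
  have hm : 0 < m := by
    rw [hmdef, dist_pos]
    refine (hball ?_).2 ?_
    · have : dist w z₁ = r := hw
      rw [this]; exact hrr₀
    · intro h; rw [h] at hw; exact hne hw
  -- eventually γ is m-close to γ 1, within δ of 1
  have hγm : ∀ᶠ t in l, dist (γ t) (γ 1) < m := by
    exact hγlim (Metric.ball_mem_nhds _ hm)
  have hclose : ∀ᶠ t in l, dist t 1 < 1 := by
    have : Tendsto (fun t : ℝ => t) l (𝓝 1) :=
      tendsto_id.mono_left nhdsWithin_le_nhds
    exact this (Metric.ball_mem_nhds _ one_pos)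
  rcases Metric.mem_nhdsWithin_iff.mp (hγm.and hmemIco) with ⟨δ, hδ, hδsub⟩
  -- find t₁ close to 1 with Γ t₁ in the ball
  have hfreq : ∃ᶠ t in l, dist (Γ t) z₁ < r := by
    have := mapClusterPt_iff_frequently.mp hcluster _ (Metric.ball_mem_nhds z₁ hr)
    simpa [Metric.mem_ball] using this
  obtain ⟨t₁, ht₁Γ, ht₁δ, ht₁Ico⟩ :
      ∃ t, dist (Γ t) z₁ < r ∧ dist t 1 < δ ∧ t ∈ Set.Ico (0:ℝ) 1 := by
    have hev : ∀ᶠ t in l, dist t 1 < δ ∧ t ∈ Set.Ico (0:ℝ) 1 := by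
      have h1 : ∀ᶠ t in l, dist t 1 < δ := by
        have : Tendsto (fun t : ℝ => t) l (𝓝 1) :=
          tendsto_id.mono_left nhdsWithin_le_nhds
        exact this (Metric.ball_mem_nhds _ hδ)
      exact h1.and hmemIco
    obtain ⟨t, h1, h2, h3⟩ := (hfreq.and_eventually hev).exists
    exact ⟨t, h1, h2, h3⟩
  -- Γ stays in the ball on [t₁, 1)
  have hstay : ∀ t ∈ Set.Ico (0:ℝ) 1, t₁ ≤ t → dist (Γ t) z₁ < r := by
    intro t₂ ht₂ hle
    by_contra hcon
    push_neg at hcon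
    have hsub : Set.Icc t₁ t₂ ⊆ Set.Ico 0 1 := fun s hs =>
      ⟨le_trans ht₁Ico.1 hs.1, lt_of_le_of_lt hs.2 ht₂.2⟩
    have hIVT := intermediate_value_Icc hle
      (((continuous_id.dist continuous_const).comp_continuousOn (hΓcont.mono hsub)) :
        ContinuousOn (fun s => dist (Γ s) z₁) (Set.Icc t₁ t₂))
    have hrmem : r ∈ Set.Icc (dist (Γ t₁) z₁) (dist (Γ t₂) z₁) := ⟨ht₁Γ.le, hcon⟩
    obtain ⟨s, hs, hseq⟩ := hIVT hrmem
    have hsIco : s ∈ Set.Ico (0:ℝ) 1 := hsub hs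
    have hsδ : dist s 1 < δ := by
      have h1 : (1:ℝ) - t₁ < δ := by
        have := ht₁δ
        rw [Real.dist_eq, abs_of_nonpos (by linarith [ht₁Ico.2] : t₁ - 1 ≤ 0)] at this
        linarith
      rw [Real.dist_eq, abs_of_nonpos (by linarith [hsIco.2] : s - 1 ≤ 0)]
      have : t₁ ≤ s := hs.1
      linarith
    have hmem : s ∈ Metric.ball (1:ℝ) δ ∩ Set.Ico 0 1 := ⟨by simpa using hsδ, hsIco⟩
    have hγs : dist (γ s) (γ 1) < m := (hδsub hmem).1
    have hfΓs : f (Γ s) = γ s := hlift s hsIco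
    have hΓsph : Γ s ∈ Metric.sphere z₁ r := hseq
    have : m ≤ dist (γ s) (γ 1) := by
      rw [← hfΓs]
      exact hwmin hΓsph
    linarith
  -- conclude
  have hIci : ∀ᶠ t in l, t₁ ≤ t := by
    have : Set.Ici t₁ ∈ 𝓝 (1:ℝ) := Ici_mem_nhds ht₁Ico.2
    exact eventually_nhdsWithin_of_eventually_nhds this
  filter_upwards [hmemIco, hIci] with t ht h1
  exact lt_trans (hstay t ht h1) hrε
end

section
/- Let f be holomorphic on D, a ∈ G, and S a transcendental singularity of f⁻¹ over a (i.e., a monotone choice V ↦ S(V) of components of f⁻¹(V) with empty intersection ⋂_V S(V)). Then there exists a curve Γ : [0,1) → D such that for every neighborhood V of a, f(Γ(t)) ∈ V for all t sufficiently close to 1; in particular Γ is an asymptotic curve of f with asymptotic value a. -/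
/-!
Take open neighbourhoods `V₀ ⊃ V₁ ⊃ ⋯` of `a` forming a basis, with `closure Vₙ₊₁ ⊆ Vₙ`.
The components `Sₙ = S(Vₙ)` are open, hence path-connected, and decrease, so paths joining
points `zₙ ∈ Sₙ` to `zₙ₊₁` concatenate to a curve that eventually stays in every `Sₙ`, and `f`
tends to `a` along it. If the curve returned to a compact `K ⊆ D` at times arbitrarily close to
`1`, compactness would give a point of `K` in every `closure Sₙ₊₁`. Such a point lies in `Sₙ`,
since `f` maps it into `closure Vₙ₊₁ ⊆ Vₙ` and components of open sets are open; so it lies in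
`⋂ S(V) = ∅`.
-/

open Set Filter Topology

namespace Path

variable {X : Type*} [TopologicalSpace X] {z : ℕ → X}

/-- Runs through `p n` on `[n, n + 1]`, and stays at `z 0` on `(-∞, 0]`. -/
noncomputable def seqConcat (p : ∀ n, Path (z n) (z (n + 1))) (s : ℝ) : X :=
  (p ⌊s⌋₊).extend (s - ⌊s⌋₊)

variable (p : ∀ n, Path (z n) (z (n + 1)))

theorem seqConcat_eq_of_mem_Icc {n : ℕ} {s : ℝ} (hs : s ∈ Icc (n : ℝ) (n + 1)) :
    seqConcat p s = (p n).extend (s - n) := by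
  rcases hs.2.lt_or_eq with hlt | rfl
  · rw [seqConcat, Nat.floor_eq_on_Ico n s ⟨hs.1, hlt⟩]
  · have hfloor : ⌊(n : ℝ) + 1⌋₊ = n + 1 := by exact_mod_cast Nat.floor_natCast (n + 1)
    rw [seqConcat, hfloor, Nat.cast_succ, sub_self, extend_zero, add_sub_cancel_left, extend_one]

theorem seqConcat_of_nonpos {s : ℝ} (hs : s ≤ 0) : seqConcat p s = z 0 := by
  rw [seqConcat, Nat.floor_of_nonpos hs, Nat.cast_zero, sub_zero, extend_of_le_zero _ hs]

theorem continuous_seqConcat : Continuous (seqConcat p) := by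
  have hlf : LocallyFinite fun n : ℤ => Icc (n : ℝ) (n + 1) :=
    locallyFinite_Icc_of_tendsto tendsto_intCast_atTop_atTop
      (tendsto_atBot_add_const_right _ 1 (tendsto_intCast_atBot_iff.2 tendsto_id))
  refine hlf.continuous (eq_univ_of_forall fun s => mem_iUnion.2 ⟨⌊s⌋, Int.floor_le s,
    (Int.lt_floor_add_one s).le⟩) (fun _ => isClosed_Icc) fun n => ?_
  rcases lt_or_ge n 0 with hn | hn
  · have hn' : (n : ℝ) + 1 ≤ 0 := by exact_mod_cast hn
    exact continuousOn_const.congr fun s hs => seqConcat_of_nonpos p (hs.2.trans hn')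
  · lift n to ℕ using hn
    refine (((p n).continuous_extend.comp (continuous_id.sub continuous_const)).continuousOn).congr
      fun s hs => seqConcat_eq_of_mem_Icc p (by exact_mod_cast hs)

theorem seqConcat_mem {S : ℕ → Set X} (hS : Antitone S) (hp : ∀ n t, p n t ∈ S n) {n : ℕ}
    {s : ℝ} (hs : n ≤ s) : seqConcat p s ∈ S n := by
  obtain ⟨t, ht⟩ : seqConcat p s ∈ range (p ⌊s⌋₊) := by
    rw [← extend_range]; exact mem_range_self _
  exact hS (Nat.le_floor hs) (ht ▸ hp _ t)

end Path

section Curves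

variable {X : Type*} [TopologicalSpace X] {S : ℕ → Set X}

theorem exists_continuous_mem_of_antitone_isPathConnected (hS : Antitone S)
    (hconn : ∀ n, IsPathConnected (S n)) :
    ∃ γ : ℝ → X, Continuous γ ∧ ∀ (n : ℕ) (s : ℝ), n ≤ s → γ s ∈ S n := by
  choose z hz using fun n => (hconn n).nonempty
  have hjoin (n : ℕ) : JoinedIn (S n) (z n) (z (n + 1)) :=
    (hconn n).joinedIn _ (hz n) _ (hS n.le_succ (hz (n + 1)))
  exact ⟨Path.seqConcat fun n => (hjoin n).somePath, Path.continuous_seqConcat _,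
    fun n s => Path.seqConcat_mem _ hS fun n => (hjoin n).somePath_mem⟩

theorem tendsto_inv_one_sub_nhdsWithin_Ico :
    Tendsto (fun t : ℝ => (1 - t)⁻¹) (𝓝[Ico 0 1] 1) atTop := by
  refine tendsto_inv_nhdsGT_zero.comp (tendsto_nhdsWithin_of_tendsto_nhds_of_eventually_within _
    ?_ (eventually_nhdsWithin_of_forall fun t ht => sub_pos.2 ht.2))
  exact ((continuous_const.sub continuous_id).tendsto' 1 0 (sub_self 1)).mono_left
    nhdsWithin_le_nhds

theorem exists_continuousOn_Ico_eventually_mem_of_antitone_isPathConnected (hS : Antitone S)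
    (hconn : ∀ n, IsPathConnected (S n)) :
    ∃ Γ : ℝ → X, ContinuousOn Γ (Ico 0 1) ∧ (∀ t ∈ Ico (0 : ℝ) 1, Γ t ∈ S 0) ∧
      ∀ n, ∀ᶠ t in 𝓝[Ico 0 1] 1, Γ t ∈ S n := by
  obtain ⟨γ, hγ, hγS⟩ := exists_continuous_mem_of_antitone_isPathConnected hS hconn
  refine ⟨fun t => γ (1 - t)⁻¹, hγ.comp_continuousOn ?_, fun t ht => hγS 0 _ ?_,
    fun n => (tendsto_inv_one_sub_nhdsWithin_Ico.eventually_ge_atTop (n : ℝ)).mono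
      fun t => hγS n _⟩
  · exact (continuousOn_const.sub continuousOn_id).inv₀ fun t ht => sub_ne_zero.2 ht.2.ne'
  · exact_mod_cast inv_nonneg.2 (sub_nonneg.2 ht.2.le)

end Curves

section Components

variable {X Y : Type*} [TopologicalSpace X] [LocallyConnectedSpace X] [TopologicalSpace Y]

theorem mem_connectedComponentIn_of_mem_closure {U : Set X} (hU : IsOpen U) {x z : X}
    (hx : x ∈ U) (hxz : x ∈ closure (connectedComponentIn U z)) :
    x ∈ connectedComponentIn U z := by
  obtain ⟨y, hyx, hyz⟩ := mem_closure_iff_nhds.1 hxz _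
    (hU.connectedComponentIn.mem_nhds (mem_connectedComponentIn hx))
  rw [connectedComponentIn_eq hyz, ← connectedComponentIn_eq hyx]
  exact mem_connectedComponentIn hx

theorem mem_connectedComponentIn_preimage_of_mem_closure {D : Set X} (hD : IsOpen D)
    {f : X → Y} (hf : ContinuousOn f D) {V W : Set Y} (hV : IsOpen V) (hWV : closure W ⊆ V)
    {T : Set X} {z x : X} (hT : T ⊆ connectedComponentIn (D ∩ f ⁻¹' V) z)
    (hTW : MapsTo f T W) (hxD : x ∈ D) (hx : x ∈ closure T) :
    x ∈ connectedComponentIn (D ∩ f ⁻¹' V) z := by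
  have hfx : f x ∈ closure W :=
    closure_mono hTW.image_subset <|
      (hf.continuousAt (hD.mem_nhds hxD)).continuousWithinAt.mem_closure_image hx
  exact mem_connectedComponentIn_of_mem_closure (hf.isOpen_inter_preimage hD hV)
    ⟨hxD, hWV hfx⟩ (closure_mono hT hx)

end Components

theorem exists_disjoint_closure_of_isCompact {X : Type*} [TopologicalSpace X] {D K : Set X}
    {S : ℕ → Set X} (hS : Antitone S) (hcl : ∀ n, closure (S (n + 1)) ∩ D ⊆ S n)
    (hempty : ⋂ n, S n = ∅) (hK : IsCompact K) (hKD : K ⊆ D) :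
    ∃ n, Disjoint K (closure (S n)) := by
  have hKS : K ∩ ⋂ n, closure (S n) = ∅ := by
    refine eq_empty_of_forall_notMem fun x ⟨hxK, hx⟩ => ?_
    have hxS : x ∈ ⋂ n, S n :=
      mem_iInter.2 fun n => hcl n ⟨mem_iInter.1 hx (n + 1), hKD hxK⟩
    simp [hempty] at hxS
  have hanti : Antitone fun n => closure (S n) := fun _ _ h => closure_mono (hS h)
  obtain ⟨n, hn⟩ := hK.elim_directed_family_closed _ (fun _ => isClosed_closure) hKS
    hanti.directed_ge
  exact ⟨n, disjoint_iff_inter_eq_empty.2 hn⟩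

theorem exists_nested_open_nhds_seq {Y : Type*} [PseudoMetricSpace Y] {G : Set Y} {a : Y}
    (hG : G ∈ 𝓝 a) :
    ∃ V : ℕ → Set Y, (∀ n, IsOpen (V n) ∧ a ∈ V n ∧ V n ⊆ G) ∧
      (∀ n, closure (V (n + 1)) ⊆ V n) ∧ ∀ W ∈ 𝓝 a, ∃ n, V n ⊆ W := by
  obtain ⟨r, hr, hrG⟩ := Metric.mem_nhds_iff.1 hG
  have hrn (n : ℕ) : 0 < r / (n + 1) := by positivity
  refine ⟨fun n => Metric.ball a (r / (n + 1)), fun n => ⟨Metric.isOpen_ball,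
    Metric.mem_ball_self (hrn n), (Metric.ball_subset_ball ?_).trans hrG⟩, fun n => ?_, ?_⟩
  · exact div_le_self hr.le (by linarith [n.cast_nonneg (α := ℝ)])
  · refine Metric.closure_ball_subset_closedBall.trans (Metric.closedBall_subset_ball ?_)
    exact div_lt_div_of_pos_left hr (by positivity) (by push_cast; linarith)
  · intro W hW
    obtain ⟨ε, hε, hεW⟩ := Metric.mem_nhds_iff.1 hW
    obtain ⟨n, hn⟩ := exists_nat_one_div_lt (div_pos hε hr)
    refine ⟨n, (Metric.ball_subset_ball ?_).trans hεW⟩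
    calc r / (n + 1) = r * (1 / (n + 1)) := by ring
      _ ≤ r * (ε / r) := by gcongr
      _ = ε := by field_simp

theorem stmt_3_general (D G : Set ℂ) (hD : IsOpen D) (hG : IsOpen G)
    (f : ℂ → ℂ) (hf : DifferentiableOn ℂ f D)
    (a : ℂ) (ha : a ∈ G) (S : Set ℂ → Set ℂ)
    (hScomp : ∀ V, IsOpen V → a ∈ V → V ⊆ G →
      ∃ z ∈ D ∩ f ⁻¹' V, S V = connectedComponentIn (D ∩ f ⁻¹' V) z)
    (hSmono : ∀ V₁ V₂, IsOpen V₁ → a ∈ V₁ → V₁ ⊆ G → IsOpen V₂ → a ∈ V₂ →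
      V₂ ⊆ G → V₁ ⊆ V₂ → S V₁ ⊆ S V₂)
    (hempty : (⋂ V ∈ {V : Set ℂ | IsOpen V ∧ a ∈ V ∧ V ⊆ G}, S V) = ∅) :
    ∃ Γ : ℝ → ℂ,
      ContinuousOn Γ (Set.Ico 0 1) ∧ (∀ t ∈ Set.Ico (0:ℝ) 1, Γ t ∈ D) ∧
      (∀ V, IsOpen V → a ∈ V → V ⊆ G →
        ∀ᶠ t in nhdsWithin 1 (Set.Ico (0:ℝ) 1), f (Γ t) ∈ V) ∧
      (∀ K : Set ℂ, K ⊆ D → IsCompact K →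
        ∀ᶠ t in nhdsWithin 1 (Set.Ico (0:ℝ) 1), Γ t ∉ K) ∧
      Filter.Tendsto (fun t => f (Γ t)) (nhdsWithin 1 (Set.Ico (0:ℝ) 1))
        (nhds a) := by
  obtain ⟨V, hV, hVcl, hVbasis⟩ := exists_nested_open_nhds_seq (hG.mem_nhds ha)
  have hSV {W : Set ℂ} (n : ℕ) (hWo : IsOpen W) (hWa : a ∈ W) (hWG : W ⊆ G) (hVW : V n ⊆ W) :
      S (V n) ⊆ S W := hSmono _ _ (hV n).1 (hV n).2.1 (hV n).2.2 hWo hWa hWG hVW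
  choose z hz hSz using fun n => hScomp (V n) (hV n).1 (hV n).2.1 (hV n).2.2
  have hSanti : Antitone fun n => S (V n) := fun m n hmn =>
    hSV n (hV m).1 (hV m).2.1 (hV m).2.2 <|
      antitone_nat_of_succ_le (fun n => subset_closure.trans (hVcl n)) hmn
  have hSsub (n : ℕ) : S (V n) ⊆ D ∩ f ⁻¹' V n := hSz n ▸ connectedComponentIn_subset _ _
  have hSconn (n : ℕ) : IsPathConnected (S (V n)) := by
    rw [hSz n, ← (hf.continuousOn.isOpen_inter_preimage hD (hV n).1).connectedComponentIn
      |>.isConnected_iff_isPathConnected]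
    exact isConnected_connectedComponentIn_iff.2 (hz n)
  have hScl (n : ℕ) : closure (S (V (n + 1))) ∩ D ⊆ S (V n) := fun x ⟨hx, hxD⟩ =>
    hSz n ▸ mem_connectedComponentIn_preimage_of_mem_closure hD hf.continuousOn (hV n).1
      (hVcl n) (hSz n ▸ hSanti n.le_succ) (fun _ hy => (hSsub (n + 1) hy).2) hxD hx
  have hSempty : ⋂ n, S (V n) = ∅ := by
    refine eq_empty_of_forall_notMem fun x hx => ?_
    have hxS : x ∈ ⋂ W ∈ {W : Set ℂ | IsOpen W ∧ a ∈ W ∧ W ⊆ G}, S W :=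
      mem_iInter₂.2 fun W ⟨hWo, hWa, hWG⟩ =>
        let ⟨n, hn⟩ := hVbasis W (hWo.mem_nhds hWa)
        hSV n hWo hWa hWG hn (mem_iInter.1 hx n)
    rw [hempty] at hxS
    exact hxS
  obtain ⟨Γ, hΓcont, hΓD, hΓS⟩ :=
    exists_continuousOn_Ico_eventually_mem_of_antitone_isPathConnected hSanti hSconn
  have hfΓ (W : Set ℂ) (hWo : IsOpen W) (hWa : a ∈ W) :
      ∀ᶠ t in 𝓝[Ico 0 1] 1, f (Γ t) ∈ W :=
    let ⟨n, hn⟩ := hVbasis W (hWo.mem_nhds hWa)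
    (hΓS n).mono fun _ ht => hn (hSsub n ht).2
  refine ⟨Γ, hΓcont, fun t ht => (hSsub 0 (hΓD t ht)).1, fun W hWo hWa _ => hfΓ W hWo hWa,
    fun K hKD hK => ?_, tendsto_nhds.2 hfΓ⟩
  obtain ⟨n, hn⟩ := exists_disjoint_closure_of_isCompact hSanti hScl hSempty hK hKD
  exact (hΓS n).mono fun _ ht hK => disjoint_left.1 hn hK (subset_closure ht)

/-- If `S` is a transcendental singularity of `f⁻¹` over `a` (a monotone
choice `V ↦ S(V)` of connected components of `f⁻¹(V)` with
`⋂_V S(V) = ∅`), then there is a curve `Γ : [0,1) → D` such that for every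
neighborhood `V` of `a`, `f(Γ(t)) ∈ V` for all `t` close to `1`; in
particular `Γ` is an asymptotic curve of `f` (it leaves every compact subset
of `D`) with asymptotic value `a`. -/
theorem stmt_3 (D G : Set ℂ) (hD : IsOpen D) (hG : IsOpen G)
    (f : ℂ → ℂ) (hf : DifferentiableOn ℂ f D)
    (hmaps : Set.MapsTo f D G) (hdense : G ⊆ closure (f '' D))
    (a : ℂ) (ha : a ∈ G) (S : Set ℂ → Set ℂ)
    (hScomp : ∀ V, IsOpen V → a ∈ V → V ⊆ G →
      ∃ z ∈ D ∩ f ⁻¹' V, S V = connectedComponentIn (D ∩ f ⁻¹' V) z)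
    (hSmono : ∀ V₁ V₂, IsOpen V₁ → a ∈ V₁ → V₁ ⊆ G → IsOpen V₂ → a ∈ V₂ →
      V₂ ⊆ G → V₁ ⊆ V₂ → S V₁ ⊆ S V₂)
    (hempty : (⋂ V ∈ {V : Set ℂ | IsOpen V ∧ a ∈ V ∧ V ⊆ G}, S V) = ∅) :
    ∃ Γ : ℝ → ℂ,
      ContinuousOn Γ (Set.Ico 0 1) ∧ (∀ t ∈ Set.Ico (0:ℝ) 1, Γ t ∈ D) ∧
      (∀ V, IsOpen V → a ∈ V → V ⊆ G →
        ∀ᶠ t in nhdsWithin 1 (Set.Ico (0:ℝ) 1), f (Γ t) ∈ V) ∧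
      (∀ K : Set ℂ, K ⊆ D → IsCompact K →
        ∀ᶠ t in nhdsWithin 1 (Set.Ico (0:ℝ) 1), Γ t ∉ K) ∧
      Filter.Tendsto (fun t => f (Γ t)) (nhdsWithin 1 (Set.Ico (0:ℝ) 1))
        (nhds a) :=
  stmt_3_general D G hD hG f hf a ha S hScomp hSmono hempty
end

section
/- For f(z) = cos z on ℂ, the Mazurkiewicz distance between the points 0 and 2πm equals 2 for every positive integer m, where the Mazurkiewicz distance between two points is the infimum of Euclidean diameters of f ∘ γ over all curves γ connecting them. -/
open Complex Set

lemma aux_lower (m : ℕ) (hm : 0 < m) (γ : ℝ → ℂ)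
    (hc : ContinuousOn γ (Set.Icc 0 1)) (h0 : γ 0 = 0)
    (h1 : γ 1 = 2 * Real.pi * m) :
    (2 : ENNReal) ≤ EMetric.diam ((Complex.cos ∘ γ) '' Set.Icc 0 1) := by
  have hre : ContinuousOn (fun t => (γ t).re) (Set.Icc 0 1) :=
    Complex.continuous_re.comp_continuousOn hc
  have hm1 : (1 : ℝ) ≤ m := by exact_mod_cast hm
  have hmem : Real.pi ∈ Set.Icc ((γ 0).re) ((γ 1).re) := by
    rw [h0, h1]
    constructor
    · simpa using Real.pi_pos.le
    · have : Real.pi ≤ 2 * Real.pi * m := by nlinarith [Real.pi_pos]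
      simpa using this
  obtain ⟨t, ht, hπ⟩ := intermediate_value_Icc (by norm_num : (0:ℝ) ≤ 1) hre hmem
  simp only at hπ
  set y : ℝ := (γ t).im with hy
  have hγt : γ t = (Real.pi : ℂ) + (y : ℂ) * Complex.I := by
    rw [← Complex.re_add_im (γ t), hπ]
  have hcos : Complex.cos (γ t) = -(Real.cosh y : ℂ) := by
    rw [hγt, Complex.cos_add]
    simp [Complex.cos_mul_I, ← Complex.ofReal_cosh]
  have hdist : (2 : ℝ) ≤ dist (Complex.cos (γ 0)) (Complex.cos (γ t)) := by
    rw [h0, Complex.cos_zero, hcos, Complex.dist_eq]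
    have h1c : (1 : ℝ) ≤ Real.cosh y := Real.one_le_cosh y
    have : (1 : ℂ) - -(Real.cosh y : ℂ) = ((1 + Real.cosh y : ℝ) : ℂ) := by
      push_cast; ring
    rw [this, Complex.norm_real, Real.norm_eq_abs]
    have habs : |1 + Real.cosh y| = 1 + Real.cosh y := abs_of_nonneg (by linarith)
    linarith [habs.ge, habs.le]
  have hmem0 : Complex.cos (γ 0) ∈ (Complex.cos ∘ γ) '' Set.Icc 0 1 :=
    ⟨0, by norm_num, rfl⟩
  have hmemt : Complex.cos (γ t) ∈ (Complex.cos ∘ γ) '' Set.Icc 0 1 :=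
    ⟨t, ht, rfl⟩
  calc (2 : ENNReal) = ENNReal.ofReal 2 := by norm_num
    _ ≤ ENNReal.ofReal (dist (Complex.cos (γ 0)) (Complex.cos (γ t))) :=
        ENNReal.ofReal_le_ofReal hdist
    _ = edist (Complex.cos (γ 0)) (Complex.cos (γ t)) := (edist_dist _ _).symm
    _ ≤ _ := EMetric.edist_le_diam_of_mem hmem0 hmemt

/-- For `f(z) = cos z` on `ℂ`, the Mazurkiewicz distance between `0` and
`2πm` equals `2` for every positive integer `m`, where the Mazurkiewicz
distance between two points is the infimum of (Euclidean) diameters of the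
images `cos ∘ γ` over all curves `γ` connecting them. -/
theorem stmt_6 (m : ℕ) (hm : 0 < m) :
    sInf {d : ENNReal | ∃ γ : ℝ → ℂ,
        ContinuousOn γ (Set.Icc 0 1) ∧ γ 0 = 0 ∧ γ 1 = 2 * Real.pi * m ∧
        d = EMetric.diam ((Complex.cos ∘ γ) '' Set.Icc 0 1)}
      = (2 : ENNReal) := by
  apply le_antisymm
  · -- upper bound: take γ(t) = 2πm t
    set γ : ℝ → ℂ := fun t => (2 * Real.pi * m * t : ℝ)
    have hγc : ContinuousOn γ (Set.Icc 0 1) := by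
      apply Continuous.continuousOn
      exact Complex.continuous_ofReal.comp (by continuity)
    have hγ0 : γ 0 = 0 := by simp [γ]
    have hγ1 : γ 1 = 2 * Real.pi * m := by simp [γ]
    have hmemS : EMetric.diam ((Complex.cos ∘ γ) '' Set.Icc 0 1) ∈
        {d : ENNReal | ∃ γ : ℝ → ℂ,
          ContinuousOn γ (Set.Icc 0 1) ∧ γ 0 = 0 ∧ γ 1 = 2 * Real.pi * m ∧
          d = EMetric.diam ((Complex.cos ∘ γ) '' Set.Icc 0 1)} :=
      ⟨γ, hγc, hγ0, hγ1, rfl⟩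
    have hub : EMetric.diam ((Complex.cos ∘ γ) '' Set.Icc 0 1) ≤ 2 := by
      apply EMetric.diam_le
      rintro a ⟨s, hs, rfl⟩ b ⟨u, hu, rfl⟩
      have key : ∀ r : ℝ, Complex.cos (γ r) = ((Real.cos (2 * Real.pi * m * r) : ℝ) : ℂ) := by
        intro r; simp only [γ, ← Complex.ofReal_cos]
      have hd : dist ((Complex.cos ∘ γ) s) ((Complex.cos ∘ γ) u) ≤ 2 := by
        simp only [Function.comp, key, Complex.dist_eq]
        rw [← Complex.ofReal_sub, Complex.norm_real, Real.norm_eq_abs]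
        have := Real.neg_one_le_cos (2 * Real.pi * m * s)
        have := Real.cos_le_one (2 * Real.pi * m * s)
        have := Real.neg_one_le_cos (2 * Real.pi * m * u)
        have := Real.cos_le_one (2 * Real.pi * m * u)
        rw [abs_le]; constructor <;> linarith
      calc edist ((Complex.cos ∘ γ) s) ((Complex.cos ∘ γ) u)
          = ENNReal.ofReal (dist _ _) := edist_dist _ _
        _ ≤ ENNReal.ofReal 2 := ENNReal.ofReal_le_ofReal hd
        _ = 2 := by norm_num
    exact le_trans (sInf_le hmemS) hub
  · apply le_sInf
    rintro d ⟨γ, hc, h0, h1, rfl⟩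
    exact aux_lower m hm γ hc h0 h1
end
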